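/- Let G = (V, E⁺, E⁰) be a fuzzy graph with weight function ω that is fuzzy c-closed, and let k ≥ 1, c ≥ 1 be integers. Assume: (i) every connected component of G⁽⁺⁾ contains two vertices that form a nonedge of G; (ii) every vertex of V has fewer than c fuzzy neighbors or at most 2kc real neighbors; (iii) there is no pair with {u,v} ∈ E⁻ and |N⁺(u) ∩ N⁺(v)| > k; (iv) there is no fuzzy edge {u,v} with |N⁰(u) ∩ N⁰(v)| < c and |N⁺(u) ∩ N⁺(v)| > k; (v) there is no clique in G⁽⁺⁾ with at least 3kc + 2 vertices; (vi) there is no nonempty clique K in G⁽⁺⁾ together with a set X of more than 2k + c + 1 vertices that is a clique in G⁽⁰⁾ and satisfies N⁺(v) = K for every v ∈ X. If G admits a clustering of cost at most k, then |V| ≤ 30k²c². -/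

import Mathlib

open Finset

/-- A fuzzy graph: a finite vertex set with disjoint symmetric irreflexive sets of
'real' edges and 'fuzzy' edges; remaining pairs of distinct vertices are 'nonedges'. -/
structure FuzzyGraph (V : Type*) where
  real : V → V → Bool
  fuzzy : V → V → Bool
  real_symm : ∀ u v, real u v = real v u
  fuzzy_symm : ∀ u v, fuzzy u v = fuzzy v u
  real_irrefl : ∀ v, real v v = false
  fuzzy_irrefl : ∀ v, fuzzy v v = false
  not_real_and_fuzzy : ∀ u v, ¬(real u v = true ∧ fuzzy u v = true)

namespace FuzzyGraph

variable {V : Type*}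

/-- The pair `{u,v}` is a nonedge: distinct, neither a real nor a fuzzy edge. -/
def nonedge (G : FuzzyGraph V) (u v : V) : Prop :=
  u ≠ v ∧ ¬G.real u v ∧ ¬G.fuzzy u v

instance (G : FuzzyGraph V) [DecidableEq V] (u v : V) : Decidable (G.nonedge u v) :=
  inferInstanceAs (Decidable (u ≠ v ∧ ¬G.real u v ∧ ¬G.fuzzy u v))

/-- The simple graph `G⁽⁺⁾` of real edges. -/
def plus (G : FuzzyGraph V) : SimpleGraph V where
  Adj u v := G.real u v
  symm := ⟨fun u v (h : G.real u v = true) => show G.real v u = true by rwa [G.real_symm] at h⟩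
  loopless := ⟨fun v (h : G.real v v = true) => by rw [G.real_irrefl] at h; exact Bool.noConfusion h⟩

/-- The simple graph `G⁽⁰⁾` of fuzzy edges. -/
def zero (G : FuzzyGraph V) : SimpleGraph V where
  Adj u v := G.fuzzy u v
  symm := ⟨fun u v (h : G.fuzzy u v = true) => show G.fuzzy v u = true by rwa [G.fuzzy_symm] at h⟩
  loopless := ⟨fun v (h : G.fuzzy v v = true) => by rw [G.fuzzy_irrefl] at h; exact Bool.noConfusion h⟩

variable [Fintype V] [DecidableEq V]

/-- The real neighborhood `N⁺(v)`. -/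
def realNbrs (G : FuzzyGraph V) (v : V) : Finset V := univ.filter fun u => G.real v u

/-- The fuzzy neighborhood `N⁰(v)`. -/
def fuzzyNbrs (G : FuzzyGraph V) (v : V) : Finset V := univ.filter fun u => G.fuzzy v u

/-- The nonneighborhood `N⁻(v)`. -/
def nonNbrs (G : FuzzyGraph V) (v : V) : Finset V := univ.filter fun u => G.nonedge v u

/-- The closed real neighborhood `N⁺[v]`. -/
def closedRealNbrs (G : FuzzyGraph V) (v : V) : Finset V := insert v (G.realNbrs v)

end FuzzyGraph

/-- `ω` is a valid weight function for `G`: symmetric nonnegative integer weights,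
zero exactly on the fuzzy edges. -/
def IsWeight {V : Type*} [Fintype V] [DecidableEq V] (G : FuzzyGraph V) (ω : V → V → ℕ) : Prop :=
  (∀ u v, ω u v = ω v u) ∧ ∀ u v : V, u ≠ v → (ω u v = 0 ↔ G.fuzzy u v)

/-- The unit weight function: weight 1 on real edges and nonedges, 0 on fuzzy edges. -/
def unitW {V : Type*} (G : FuzzyGraph V) : V → V → ℕ := fun u v => if G.fuzzy u v then 0 else 1

/-- Two vertices lie in a common cluster of the clustering `𝒞`. -/
def together {V : Type*} [Fintype V] [DecidableEq V] (𝒞 : Finpartition (univ : Finset V))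
    (u v : V) : Prop :=
  ∃ C ∈ 𝒞.parts, u ∈ C ∧ v ∈ C

instance {V : Type*} [Fintype V] [DecidableEq V] (𝒞 : Finpartition (univ : Finset V)) (u v : V) :
    Decidable (together 𝒞 u v) :=
  inferInstanceAs (Decidable (∃ C ∈ 𝒞.parts, u ∈ C ∧ v ∈ C))

/-- The cost of a clustering: total weight of real edges between different clusters
plus total weight of nonedges inside clusters.  (Each unordered pair is counted twice
in the sum over ordered pairs, whence the division by 2.) -/
def cost {V : Type*} [Fintype V] [DecidableEq V] (G : FuzzyGraph V) (ω : V → V → ℕ)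
    (𝒞 : Finpartition (univ : Finset V)) : ℕ :=
  (∑ p ∈ univ.offDiag,
      ((if G.real p.1 p.2 ∧ ¬together 𝒞 p.1 p.2 then ω p.1 p.2 else 0) +
       (if G.nonedge p.1 p.2 ∧ together 𝒞 p.1 p.2 then ω p.1 p.2 else 0))) / 2

/-- A clique in `G⁽⁺⁾`: pairwise real-adjacent vertices. -/
def IsRealClique {V : Type*} (G : FuzzyGraph V) (K : Finset V) : Prop :=
  ∀ u ∈ K, ∀ v ∈ K, u ≠ v → G.real u v

/-- A clique in `G⁽⁰⁾`: pairwise fuzzy-adjacent vertices. -/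
def IsFuzzyClique {V : Type*} (G : FuzzyGraph V) (K : Finset V) : Prop :=
  ∀ u ∈ K, ∀ v ∈ K, u ≠ v → G.fuzzy u v

/-- A critical clique of `G⁽⁺⁾`: a clique with `⋂_{x ∈ K} N⁺[x] = ⋃_{x ∈ K} N⁺[x]`,
inclusion-wise maximal with this property. -/
def IsCriticalClique {V : Type*} [Fintype V] [DecidableEq V] (G : FuzzyGraph V)
    (K : Finset V) : Prop :=
  IsRealClique G K ∧ K.inf (G.closedRealNbrs) = K.sup (G.closedRealNbrs) ∧
    ∀ K' : Finset V, K ⊆ K' → IsRealClique G K' →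
      K'.inf (G.closedRealNbrs) = K'.sup (G.closedRealNbrs) → K' = K

/-- A simple graph is `c`-closed if every pair of distinct nonadjacent vertices has
fewer than `c` common neighbors. -/
def IsCClosed {V : Type*} (H : SimpleGraph V) (c : ℕ) : Prop :=
  ∀ u v : V, u ≠ v → ¬H.Adj u v → Set.ncard {w | H.Adj u w ∧ H.Adj v w} < c

/-- A fuzzy graph is fuzzy `c`-closed if its fuzzy edge graph `G⁽⁰⁾` is `c`-closed. -/
def FuzzyCClosed {V : Type*} [Fintype V] [DecidableEq V] (G : FuzzyGraph V) (c : ℕ) : Prop :=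
  ∀ u v : V, u ≠ v → ¬G.fuzzy u v → ((G.fuzzyNbrs u) ∩ (G.fuzzyNbrs v)).card < c

/-!
A clustering of cost at most `k` edits at most `k` pairs, so at most `2k` vertices are affected by
it. Every cluster contains an affected vertex, since a cluster of unaffected vertices is a union of
components of `G⁽⁺⁾` and every component contains a nonedge; so there are at most `2k` clusters.
The unaffected vertices of a cluster are joined to the whole cluster and have all their real
neighbours in it. Those with fewer than `c` fuzzy neighbours are dominated by a real clique, so
there are at most `c(3kc + 1)` of them. The others have at most `2kc` real neighbours. If one of
them has a real neighbour of real degree at most `2kc`, fuzzy `c`-closedness leaves fewer than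
`4kc + c` of them. Otherwise all their real neighbours have fewer than `c` fuzzy neighbours; if two
of these are not real-adjacent, (iii) and (iv) leave at most `2c + k`, and if they form a clique,
(v) and (vi) leave at most `3kc² + 2k + 2c + 1`.
Hence `|V| ≤ 2k + 2k(6kc² + 2k + 3c + 1) ≤ 30k²c²`.
-/

theorem Finset.even_sum_offDiag {ι : Type*} [DecidableEq ι] (s : Finset ι) (f : ι × ι → ℕ)
    (hf : ∀ p, f p.swap = f p) : Even (∑ p ∈ s.offDiag, f p) := by
  rw [← ZMod.natCast_eq_zero_iff_even, Nat.cast_sum]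
  -- modulo 2, the terms at `p` and `p.swap` cancel
  refine Finset.sum_involution (fun p _ => p.swap) (fun p _ => ?_) (fun p hp _ => ?_)
    (fun p hp => by simp only [mem_offDiag, Prod.fst_swap, Prod.snd_swap] at hp ⊢; tauto)
    (fun p _ => p.swap_swap)
  · rw [hf, ← two_mul, show (2 : ZMod 2) = 0 from rfl, zero_mul]
  · obtain ⟨-, -, hne⟩ := Finset.mem_offDiag.mp hp
    exact fun h => hne (congrArg Prod.fst h).symm

theorem SimpleGraph.Reachable.mem_of_adj_mem {V : Type*} {H : SimpleGraph V} {S : Set V}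
    (hS : ∀ a ∈ S, ∀ b, H.Adj a b → b ∈ S) {w u : V} (h : H.Reachable w u) (hw : w ∈ S) :
    u ∈ S := by
  rw [SimpleGraph.reachable_iff_reflTransGen] at h
  induction h with
  | refl => exact hw
  | tail _ hab ih => exact hS _ ih _ hab

theorem together_comm {V : Type*} [Fintype V] [DecidableEq V]
    {𝒞 : Finpartition (univ : Finset V)} {u v : V} : together 𝒞 u v ↔ together 𝒞 v u :=
  ⟨fun ⟨C, hC, hu, hv⟩ => ⟨C, hC, hv, hu⟩, fun ⟨C, hC, hv, hu⟩ => ⟨C, hC, hu, hv⟩⟩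

theorem mem_of_together {V : Type*} [Fintype V] [DecidableEq V]
    {𝒞 : Finpartition (univ : Finset V)} {C : Finset V} (hC : C ∈ 𝒞.parts) {u v : V}
    (hu : u ∈ C) (h : together 𝒞 u v) : v ∈ C := by
  obtain ⟨C', hC', hu', hv'⟩ := h
  rwa [𝒞.eq_of_mem_parts hC hC' hu hu']

namespace FuzzyGraph

section Neighbourhoods

variable {V : Type*} {G : FuzzyGraph V} {u v : V}

theorem ne_of_real (h : G.real u v) : u ≠ v := by
  rintro rfl
  simp [G.real_irrefl] at h

theorem not_fuzzy_of_real (h : G.real u v) : ¬G.fuzzy u v :=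
  fun hf => G.not_real_and_fuzzy u v ⟨h, hf⟩

theorem real_comm : G.real u v ↔ G.real v u := by rw [G.real_symm]

theorem fuzzy_comm : G.fuzzy u v ↔ G.fuzzy v u := by rw [G.fuzzy_symm]

theorem nonedge_comm : G.nonedge u v ↔ G.nonedge v u := by
  rw [nonedge, nonedge, real_comm, fuzzy_comm, ne_comm]

theorem isRealClique_iff {K : Finset V} : IsRealClique G K ↔ G.plus.IsClique (K : Set V) :=
  Iff.rfl

theorem exists_real
    (h0 : ∀ w : V, ∃ u v : V, G.plus.Reachable w u ∧ G.plus.Reachable w v ∧ G.nonedge u v)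
    (w : V) : ∃ z, G.real w z := by
  by_contra! hw
  have hclosed : ∀ a ∈ ({w} : Set V), ∀ b, G.plus.Adj a b → b ∈ ({w} : Set V) := by
    rintro a rfl b hab
    exact absurd hab (hw b)
  obtain ⟨u, v, hu, hv, huv⟩ := h0 w
  exact huv.1 ((hu.mem_of_adj_mem hclosed rfl).trans (hv.mem_of_adj_mem hclosed rfl).symm)

variable [Fintype V]

@[simp]
theorem mem_realNbrs : u ∈ G.realNbrs v ↔ G.real v u := by simp [realNbrs]

@[simp]
theorem mem_fuzzyNbrs : u ∈ G.fuzzyNbrs v ↔ G.fuzzy v u := by simp [fuzzyNbrs]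

variable [DecidableEq V]

theorem not_nonedge_iff : ¬G.nonedge u v ↔ v ∈ insert u (G.realNbrs u ∪ G.fuzzyNbrs u) := by
  simp only [nonedge, mem_insert, mem_union, mem_realNbrs, mem_fuzzyNbrs]
  tauto

theorem card_insert_fuzzyNbrs_le {c : ℕ} {u : V} (hu : #(G.fuzzyNbrs u) < c) :
    #(insert u (G.fuzzyNbrs u)) ≤ c :=
  (card_insert_le _ _).trans hu

theorem card_lt_of_real {c : ℕ} (hcl : FuzzyCClosed G c) {u v : V} (huv : G.real u v)
    {A : Finset V} (hA : ∀ y ∈ A, ¬G.nonedge u y ∧ ¬G.nonedge v y) :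
    #A < #(G.realNbrs u) + #(G.realNbrs v) + c := by
  have hcover : A ⊆ G.realNbrs u ∪ G.realNbrs v ∪ (G.fuzzyNbrs u ∩ G.fuzzyNbrs v) := by
    intro y hy
    have hu := not_nonedge_iff.mp (hA y hy).1
    have hv := not_nonedge_iff.mp (hA y hy).2
    have hvu : G.real v u := real_comm.mp huv
    simp only [mem_insert, mem_union, mem_inter, mem_realNbrs, mem_fuzzyNbrs] at hu hv ⊢
    rcases hu with rfl | hu | hu <;> rcases hv with rfl | hv | hv <;> tauto
  calc #A ≤ #(G.realNbrs u ∪ G.realNbrs v) + #(G.fuzzyNbrs u ∩ G.fuzzyNbrs v) :=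
        (card_le_card hcover).trans (card_union_le _ _)
    _ < _ := add_lt_add_of_le_of_lt (card_union_le _ _)
        (hcl u v (ne_of_real huv) (not_fuzzy_of_real huv))

/-- A largest real clique `K` in `D` dominates `D`: each vertex of `D` outside `K` is a fuzzy
neighbour of a vertex of `K`. -/
theorem exists_isRealClique_card_le_mul {c : ℕ} {D : Finset V}
    (hD : ∀ v ∈ D, #(G.fuzzyNbrs v) < c) (hjoin : ∀ u ∈ D, ∀ v ∈ D, ¬G.nonedge u v) :
    ∃ K ⊆ D, IsRealClique G K ∧ #D ≤ #K * c := by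
  classical
  obtain ⟨K, hK, hmax⟩ := (D.powerset.filter (IsRealClique G)).exists_max_image card
    ⟨∅, by simp [IsRealClique]⟩
  obtain ⟨hKD, hKcl⟩ := mem_filter.mp hK
  rw [mem_powerset] at hKD
  refine ⟨K, hKD, hKcl, (card_le_card fun y hy => ?_).trans
    (card_biUnion_le_card_mul K (fun x => insert x (G.fuzzyNbrs x)) c
      fun x hx => card_insert_fuzzyNbrs_le (hD x (hKD hx)))⟩
  by_cases hyK : y ∈ K
  · exact mem_biUnion.mpr ⟨y, hyK, mem_insert_self _ _⟩
  have : ∃ x ∈ K, ¬G.real x y := by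
    by_contra! hall
    have hcl : IsRealClique G (insert y K) := by
      rw [isRealClique_iff, coe_insert, SimpleGraph.isClique_insert]
      exact ⟨hKcl, fun x hx _ => real_comm.mp (hall x hx)⟩
    have := hmax (insert y K) (mem_filter.mpr ⟨mem_powerset.mpr (insert_subset hy hKD), hcl⟩)
    rw [card_insert_of_notMem hyK] at this
    omega
  obtain ⟨x, hxK, hxy⟩ := this
  have hxy' := not_nonedge_iff.mp (hjoin x (hKD hxK) y hy)
  simp only [mem_insert, mem_union, mem_realNbrs] at hxy'
  refine mem_biUnion.mpr ⟨x, hxK, ?_⟩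
  rcases hxy' with rfl | h | h
  exacts [absurd hxK hyK, absurd h hxy, mem_insert_of_mem h]

end Neighbourhoods

section Clustering

variable {V : Type*} [Fintype V] [DecidableEq V] (G : FuzzyGraph V)
  (𝒞 : Finpartition (univ : Finset V))

def Edited (u v : V) : Prop :=
  (G.real u v ∧ ¬together 𝒞 u v) ∨ (G.nonedge u v ∧ together 𝒞 u v)

instance (u v : V) : Decidable (G.Edited 𝒞 u v) :=
  inferInstanceAs (Decidable (_ ∨ _))

def affected : Finset V := {v | ∃ u, G.Edited 𝒞 v u}

theorem card_affected_le {ω : V → V → ℕ} (hω : IsWeight G ω) :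
    #(G.affected 𝒞) ≤ 2 * cost G ω 𝒞 := by
  set f : V × V → ℕ := fun p =>
    (if G.real p.1 p.2 ∧ ¬together 𝒞 p.1 p.2 then ω p.1 p.2 else 0) +
    (if G.nonedge p.1 p.2 ∧ together 𝒞 p.1 p.2 then ω p.1 p.2 else 0)
  have hf_swap : ∀ p, f p.swap = f p := fun ⟨u, v⟩ => by
    simp only [f, Prod.swap, hω.1 v u, real_comm (u := v), nonedge_comm (u := v),
      together_comm (u := v)]
  have hf_pos : ∀ p ∈ univ.offDiag, G.Edited 𝒞 p.1 p.2 → 1 ≤ f p := by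
    intro p hp hpaid
    have hω_pos : ¬G.fuzzy p.1 p.2 → 1 ≤ ω p.1 p.2 := fun h =>
      Nat.one_le_iff_ne_zero.mpr ((hω.2 _ _ (mem_offDiag.mp hp).2.2).not.mpr h)
    rcases hpaid with h | h
    · exact (hω_pos (not_fuzzy_of_real h.1)).trans (by simp [f, h])
    · exact (hω_pos h.1.2.2).trans (by simp [f, h])
  set P := univ.offDiag.filter fun p => G.Edited 𝒞 p.1 p.2
  -- the sum that `cost` halves is even, as `f` is symmetric
  calc #(G.affected 𝒞)
      ≤ #(P.image Prod.fst) := card_le_card fun v hv => by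
        obtain ⟨u, hvu⟩ := (mem_filter.mp hv).2
        have hne : v ≠ u := by
          rcases hvu with h | h
          exacts [ne_of_real h.1, h.1.1]
        exact mem_image.mpr ⟨(v, u), by simp [P, hne, hvu], rfl⟩
    _ ≤ #P := card_image_le
    _ = ∑ _p ∈ P, 1 := card_eq_sum_ones P
    _ ≤ ∑ p ∈ P, f p := sum_le_sum fun p hp => hf_pos p (mem_filter.mp hp).1 (mem_filter.mp hp).2
    _ ≤ ∑ p ∈ univ.offDiag, f p := sum_le_sum_of_subset (filter_subset _ _)
    _ = 2 * cost G ω 𝒞 :=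
        (Nat.two_mul_div_two_of_even (even_sum_offDiag _ f hf_swap)).symm

variable {G 𝒞}

theorem not_nonedge_of_notMem_affected {C : Finset V} (hC : C ∈ 𝒞.parts) {x z : V}
    (hx : x ∈ C) (hz : z ∈ C) (hxa : x ∉ G.affected 𝒞) : ¬G.nonedge x z :=
  fun h => hxa (mem_filter.mpr ⟨mem_univ x, z, Or.inr ⟨h, C, hC, hx, hz⟩⟩)

theorem realNbrs_subset_of_notMem_affected {C : Finset V} (hC : C ∈ 𝒞.parts) {x : V}
    (hx : x ∈ C) (hxa : x ∉ G.affected 𝒞) : G.realNbrs x ⊆ C := by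
  intro z hz
  by_contra hzC
  refine hxa (mem_filter.mpr ⟨mem_univ x, z, Or.inl ⟨mem_realNbrs.mp hz, fun h => hzC ?_⟩⟩)
  exact mem_of_together hC hx h

/-- Every cluster contains an affected vertex: otherwise it is a union of components of `G⁽⁺⁾`,
and the nonedge inside such a component would be paid for. -/
theorem card_parts_le_card_affected
    (h0 : ∀ w : V, ∃ u v : V, G.plus.Reachable w u ∧ G.plus.Reachable w v ∧ G.nonedge u v) :
    #𝒞.parts ≤ #(G.affected 𝒞) := by
  suffices 𝒞.parts ⊆ (G.affected 𝒞).image 𝒞.part from (card_le_card this).trans card_image_le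
  intro C hC
  by_contra hCa
  have hclean : ∀ x ∈ C, x ∉ G.affected 𝒞 := fun x hx hxa =>
    hCa (mem_image.mpr ⟨x, hxa, 𝒞.part_eq_of_mem hC hx⟩)
  have hclosed : ∀ a ∈ (C : Set V), ∀ b, G.plus.Adj a b → b ∈ (C : Set V) := fun a ha b hab =>
    realNbrs_subset_of_notMem_affected hC ha (hclean a ha) (mem_realNbrs.mpr hab)
  obtain ⟨w, hw⟩ := 𝒞.nonempty_of_mem_parts hC
  obtain ⟨u, v, hu, hv, huv⟩ := h0 w
  have huC : u ∈ C := hu.mem_of_adj_mem hclosed hw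
  exact not_nonedge_of_notMem_affected hC huC (hv.mem_of_adj_mem hclosed hw) (hclean u huC) huv

end Clustering

section

variable {V : Type*} [Fintype V] [DecidableEq V]

/-- Fuzzy `c`-closedness together with conditions (ii)–(vi). -/
structure Reduced (G : FuzzyGraph V) (c k : ℕ) : Prop where
  fuzzyCClosed : FuzzyCClosed G c
  card_fuzzyNbrs_lt_or_card_realNbrs_le :
    ∀ v, #(G.fuzzyNbrs v) < c ∨ #(G.realNbrs v) ≤ 2 * k * c
  card_inter_realNbrs_le_of_nonedge :
    ∀ u v, G.nonedge u v → #(G.realNbrs u ∩ G.realNbrs v) ≤ k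
  card_inter_realNbrs_le_of_fuzzy : ∀ u v, G.fuzzy u v →
    #(G.fuzzyNbrs u ∩ G.fuzzyNbrs v) < c → #(G.realNbrs u ∩ G.realNbrs v) ≤ k
  card_lt_of_isRealClique : ∀ K, IsRealClique G K → #K < 3 * k * c + 2
  card_le_of_realNbrs_eq : ∀ K X : Finset V, K.Nonempty → IsRealClique G K →
    IsFuzzyClique G X → (∀ v ∈ X, G.realNbrs v = K) → #X ≤ 2 * k + c + 1

namespace Reduced

variable {G : FuzzyGraph V} {c k : ℕ}

theorem card_inter_realNbrs_le (hG : G.Reduced c k) {u v : V} (hne : u ≠ v)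
    (hnr : ¬G.real u v) (hu : #(G.fuzzyNbrs u) < c) : #(G.realNbrs u ∩ G.realNbrs v) ≤ k := by
  by_cases hf : G.fuzzy u v
  · exact hG.card_inter_realNbrs_le_of_fuzzy u v hf
      ((card_le_card inter_subset_left).trans_lt hu)
  · exact hG.card_inter_realNbrs_le_of_nonedge u v ⟨hne, hnr, hf⟩

theorem card_le_of_not_real (hG : G.Reduced c k) {u v : V} (hne : u ≠ v) (hnr : ¬G.real u v)
    (hu : #(G.fuzzyNbrs u) < c) (hv : #(G.fuzzyNbrs v) < c) {A : Finset V}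
    (hA : ∀ y ∈ A, ¬G.nonedge u y ∧ ¬G.nonedge v y) : #A ≤ 2 * c + k := by
  have hcover : A ⊆ insert u (G.fuzzyNbrs u) ∪ insert v (G.fuzzyNbrs v) ∪
      (G.realNbrs u ∩ G.realNbrs v) := by
    intro y hy
    have hyu := not_nonedge_iff.mp (hA y hy).1
    have hyv := not_nonedge_iff.mp (hA y hy).2
    simp only [mem_insert, mem_union, mem_inter] at hyu hyv ⊢
    tauto
  calc #A ≤ #(insert u (G.fuzzyNbrs u) ∪ insert v (G.fuzzyNbrs v)) +
        #(G.realNbrs u ∩ G.realNbrs v) := (card_le_card hcover).trans (card_union_le _ _)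
    _ ≤ (c + c) + k := add_le_add ((card_union_le _ _).trans
        (add_le_add (card_insert_fuzzyNbrs_le hu) (card_insert_fuzzyNbrs_le hv)))
        (hG.card_inter_realNbrs_le hne hnr hu)
    _ = 2 * c + k := by ring

theorem card_le_of_isRealClique_biUnion (hG : G.Reduced c k) {A : Finset V}
    (hA : IsFuzzyClique G A) (hZ : IsRealClique G (A.biUnion G.realNbrs))
    (hZne : (A.biUnion G.realNbrs).Nonempty)
    (hsmall : ∀ z ∈ A.biUnion G.realNbrs, #(G.fuzzyNbrs z) < c)
    (hjoin : ∀ z ∈ A.biUnion G.realNbrs, ∀ y ∈ A, ¬G.nonedge z y) :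
    #A ≤ (3 * k * c + 1) * c + (2 * k + c + 1) := by
  set Z := A.biUnion G.realNbrs
  set X := A.filter fun x => G.realNbrs x = Z
  have hX : #X ≤ 2 * k + c + 1 := hG.card_le_of_realNbrs_eq Z X hZne hZ
    (fun u hu v hv => hA u (mem_filter.mp hu).1 v (mem_filter.mp hv).1)
    (fun v hv => (mem_filter.mp hv).2)
  -- each `y ∈ A \ X` has `N⁺(y) ⊊ Z`, and `y ∈ N⁰(z)` for any `z ∈ Z \ N⁺(y)`
  have hcover : A \ X ⊆ Z.biUnion fun z => insert z (G.fuzzyNbrs z) := by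
    intro y hy
    obtain ⟨hyA, hyX⟩ := mem_sdiff.mp hy
    obtain ⟨z, hzZ, hzy⟩ := exists_of_ssubset (Finset.ssubset_iff_subset_ne.mpr
      ⟨subset_biUnion_of_mem G.realNbrs hyA, fun h => hyX (mem_filter.mpr ⟨hyA, h⟩)⟩)
    have h := not_nonedge_iff.mp (hjoin z hzZ y hyA)
    rw [mem_realNbrs, real_comm, ← mem_realNbrs] at hzy
    simp only [mem_insert, mem_union] at h
    exact mem_biUnion.mpr ⟨z, hzZ, by simp only [mem_insert]; tauto⟩
  have hZcard : #Z ≤ 3 * k * c + 1 := Nat.lt_succ_iff.mp (hG.card_lt_of_isRealClique Z hZ)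
  calc #A ≤ #(A \ X) + #X := card_le_card_sdiff_add_card
    _ ≤ #Z * c + (2 * k + c + 1) := add_le_add ((card_le_card hcover).trans
        (card_biUnion_le_card_mul _ _ _ fun z hz => card_insert_fuzzyNbrs_le (hsmall z hz))) hX
    _ ≤ _ := by gcongr

theorem card_le_of_forall_card_realNbrs_le (hG : G.Reduced c k) (hk : 1 ≤ k) (hc : 1 ≤ c)
    (hreal : ∀ v, ∃ z, G.real v z) {A C : Finset V} (hAC : A ⊆ C)
    (hjoin : ∀ x ∈ A, ∀ z ∈ C, ¬G.nonedge x z) (hclosed : ∀ x ∈ A, G.realNbrs x ⊆ C)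
    (hdeg : ∀ v ∈ A, #(G.realNbrs v) ≤ 2 * k * c) :
    #A ≤ 3 * k * c ^ 2 + 2 * k + 2 * c + 1 := by
  have hjoin' : ∀ x ∈ A, ∀ z ∈ C, ¬G.nonedge z x := fun x hx z hz =>
    nonedge_comm.not.mp (hjoin x hx z hz)
  by_cases hlow : ∃ x ∈ A, ∃ z, G.real x z ∧ #(G.realNbrs z) ≤ 2 * k * c
  · obtain ⟨x, hx, z, hxz, hz⟩ := hlow
    have := card_lt_of_real hG.fuzzyCClosed hxz fun y hy =>
      ⟨hjoin' y hy x (hAC hx), hjoin' y hy z (hclosed x hx (mem_realNbrs.mpr hxz))⟩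
    have := hdeg x hx
    nlinarith [Nat.mul_le_mul_left (k * c) hc]
  push Not at hlow
  set Z := A.biUnion G.realNbrs
  have hZ_mem : ∀ z ∈ Z, ∃ x ∈ A, G.real x z := by simp [Z]
  have hsmall : ∀ z ∈ Z, #(G.fuzzyNbrs z) < c := fun z hz => by
    obtain ⟨x, hx, hxz⟩ := hZ_mem z hz
    exact (hG.card_fuzzyNbrs_lt_or_card_realNbrs_le z).resolve_right (hlow x hx z hxz).not_ge
  have hjoinZ : ∀ z ∈ Z, ∀ y ∈ A, ¬G.nonedge z y := fun z hz y hy => by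
    obtain ⟨x, hx, hxz⟩ := hZ_mem z hz
    exact hjoin' y hy z (hclosed x hx (mem_realNbrs.mpr hxz))
  by_cases hZ : IsRealClique G Z
  · rcases A.eq_empty_or_nonempty with rfl | ⟨x, hx⟩
    · simp
    -- `A` has no real edge, since real neighbours of `A` have more than `2kc` real neighbours
    have hA : IsFuzzyClique G A := fun u hu v hv hne => by
      have h := not_nonedge_iff.mp (hjoin u hu v (hAC hv))
      simp only [mem_insert, mem_union, mem_realNbrs, mem_fuzzyNbrs] at h
      rcases h with rfl | h | h
      exacts [absurd rfl hne, absurd (hdeg v hv) (hlow u hu v h).not_ge, h]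
    obtain ⟨z, hxz⟩ := hreal x
    have := hG.card_le_of_isRealClique_biUnion hA hZ
      ⟨z, mem_biUnion.mpr ⟨x, hx, mem_realNbrs.mpr hxz⟩⟩ hsmall hjoinZ
    nlinarith
  · simp only [IsRealClique, not_forall] at hZ
    obtain ⟨z, hz, z', hz', hne, hnr⟩ := hZ
    have := hG.card_le_of_not_real hne hnr (hsmall z hz) (hsmall z' hz') fun y hy =>
      ⟨hjoinZ z hz y hy, hjoinZ z' hz' y hy⟩
    omega

theorem card_le_of_forall_card_fuzzyNbrs_lt (hG : G.Reduced c k) {D : Finset V}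
    (hD : ∀ v ∈ D, #(G.fuzzyNbrs v) < c) (hjoin : ∀ u ∈ D, ∀ v ∈ D, ¬G.nonedge u v) :
    #D ≤ (3 * k * c + 1) * c := by
  obtain ⟨K, -, hK, hDK⟩ := exists_isRealClique_card_le_mul hD hjoin
  exact hDK.trans
    (Nat.mul_le_mul_right c (Nat.lt_succ_iff.mp (hG.card_lt_of_isRealClique K hK)))

theorem card_le_of_joined (hG : G.Reduced c k) (hk : 1 ≤ k) (hc : 1 ≤ c)
    (hreal : ∀ v, ∃ z, G.real v z) {S C : Finset V} (hSC : S ⊆ C)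
    (hjoin : ∀ x ∈ S, ∀ z ∈ C, ¬G.nonedge x z) (hclosed : ∀ x ∈ S, G.realNbrs x ⊆ C) :
    #S ≤ 6 * k * c ^ 2 + 2 * k + 3 * c + 1 := by
  have hA := hG.card_le_of_forall_card_realNbrs_le hk hc hreal
    ((filter_subset (fun v => c ≤ #(G.fuzzyNbrs v)) S).trans hSC)
    (fun x hx => hjoin x (mem_filter.mp hx).1) (fun x hx => hclosed x (mem_filter.mp hx).1)
    fun v hv => (hG.card_fuzzyNbrs_lt_or_card_realNbrs_le v).resolve_left
      (mem_filter.mp hv).2.not_gt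
  have hD := hG.card_le_of_forall_card_fuzzyNbrs_lt
    (D := S.filter fun v => ¬c ≤ #(G.fuzzyNbrs v)) (fun v hv => not_le.mp (mem_filter.mp hv).2)
    fun u hu v hv => hjoin u (mem_filter.mp hu).1 v (hSC (mem_filter.mp hv).1)
  rw [← card_filter_add_card_filter_not (fun v => c ≤ #(G.fuzzyNbrs v))]
  nlinarith

theorem card_sdiff_affected_le (hG : G.Reduced c k) (hk : 1 ≤ k) (hc : 1 ≤ c)
    (hreal : ∀ v, ∃ z, G.real v z) {𝒞 : Finpartition (univ : Finset V)} {C : Finset V}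
    (hC : C ∈ 𝒞.parts) : #(C \ G.affected 𝒞) ≤ 6 * k * c ^ 2 + 2 * k + 3 * c + 1 :=
  hG.card_le_of_joined hk hc hreal sdiff_subset
    (fun _ hx _ hz => not_nonedge_of_notMem_affected hC (mem_sdiff.mp hx).1 hz (mem_sdiff.mp hx).2)
    fun _ hx => realNbrs_subset_of_notMem_affected hC (mem_sdiff.mp hx).1 (mem_sdiff.mp hx).2

end Reduced

end

end FuzzyGraph

/-- Under the stated reducedness conditions on a fuzzy `c`-closed graph, if
every connected component of `G⁽⁺⁾` contains a nonedge and `G` admits a clustering of cost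
at most `k`, then `|V| ≤ 30k²c²`. -/
theorem stmt12 {V : Type*} [Fintype V] [DecidableEq V]
    (G : FuzzyGraph V) (ω : V → V → ℕ) (hω : IsWeight G ω) (c k : ℕ) (hk : 1 ≤ k) (hc : 1 ≤ c)
    (hcl : FuzzyCClosed G c)
    (h0 : ∀ w : V, ∃ u v : V, G.plus.Reachable w u ∧ G.plus.Reachable w v ∧ G.nonedge u v)
    (h1 : ∀ v : V, (G.fuzzyNbrs v).card < c ∨ (G.realNbrs v).card ≤ 2 * k * c)
    (h2 : ∀ u v : V, G.nonedge u v → ((G.realNbrs u) ∩ (G.realNbrs v)).card ≤ k)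
    (h3 : ∀ u v : V, G.fuzzy u v → ((G.fuzzyNbrs u) ∩ (G.fuzzyNbrs v)).card < c →
      ((G.realNbrs u) ∩ (G.realNbrs v)).card ≤ k)
    (h4 : ∀ K : Finset V, IsRealClique G K → K.card < 3 * k * c + 2)
    (h5 : ∀ K X : Finset V, K.Nonempty → IsRealClique G K → IsFuzzyClique G X →
      (∀ v ∈ X, G.realNbrs v = K) → X.card ≤ 2 * k + c + 1)
    (hsol : ∃ 𝒞 : Finpartition (Finset.univ : Finset V), cost G ω 𝒞 ≤ k) :
    Fintype.card V ≤ 30 * k ^ 2 * c ^ 2 := by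
  obtain ⟨𝒞, hcost⟩ := hsol
  have hG : G.Reduced c k := ⟨hcl, h1, h2, h3, h4, h5⟩
  set B := G.affected 𝒞
  have hB : #B ≤ 2 * k := (G.card_affected_le 𝒞 hω).trans (by omega)
  have hparts : #𝒞.parts ≤ 2 * k := (FuzzyGraph.card_parts_le_card_affected h0).trans hB
  have hcores : ∀ C ∈ 𝒞.parts, #(C \ B) ≤ 6 * k * c ^ 2 + 2 * k + 3 * c + 1 := fun _ hC =>
    hG.card_sdiff_affected_le hk hc (FuzzyGraph.exists_real h0) hC
  have hrest : univ \ B ⊆ 𝒞.parts.biUnion (· \ B) := fun v hv =>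
    mem_biUnion.mpr ⟨𝒞.part v, 𝒞.part_mem.mpr (mem_univ v),
      mem_sdiff.mpr ⟨𝒞.mem_part (mem_univ v), (mem_sdiff.mp hv).2⟩⟩
  calc Fintype.card V = #(univ \ B) + #B := (card_sdiff_add_card_eq_card (subset_univ B)).symm
    _ ≤ #𝒞.parts * (6 * k * c ^ 2 + 2 * k + 3 * c + 1) + #B :=
        add_le_add_left ((card_le_card hrest).trans (card_biUnion_le_card_mul _ _ _ hcores)) _
    _ ≤ 2 * k * (6 * k * c ^ 2 + 2 * k + 3 * c + 1) + 2 * k := by gcongr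
    _ ≤ 30 * k ^ 2 * c ^ 2 := by
        nlinarith [Nat.mul_le_mul hk hc, Nat.le_mul_of_pos_right k hc,
          Nat.le_self_pow two_ne_zero (k * c)]
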